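/- For a simplicial group G and the recursively defined section S_G of D_G, one has for each i ∈ [0,n−1] the identity y_i d_n d_{n−1} ⋯ d_{i+1} = g_i, where (y_j)_j = (g_j)_j (S_G)_n. (This is the key inductive computation showing S_G D_G = id.) -/

import Mathlib

namespace Paper

/-- clamped coface map `δ^k : [a] → [b]`. -/
def δOH (k a b : ℕ) : Fin (a+1) →o Fin (b+1) where
  toFun i := ⟨min (if (i:ℕ) < k then (i:ℕ) else (i:ℕ)+1) b, Nat.lt_succ_of_le (Nat.min_le_right _ _)⟩
  monotone' := by
    intro i j hij
    have h : (i:ℕ) ≤ (j:ℕ) := hij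
    simp only [Fin.mk_le_mk]
    split_ifs <;> omega

/-- clamped codegeneracy map `σ^k : [a] → [b]`. -/
def σOH (k a b : ℕ) : Fin (a+1) →o Fin (b+1) where
  toFun i := ⟨min (if (i:ℕ) ≤ k then (i:ℕ) else (i:ℕ)-1) b, Nat.lt_succ_of_le (Nat.min_le_right _ _)⟩
  monotone' := by
    intro i j hij
    have h : (i:ℕ) ≤ (j:ℕ) := hij
    simp only [Fin.mk_le_mk]
    split_ifs <;> omega

/-- `τ^k : [n] → [1]`, sending `[0, n-k]` to `0` and the rest to `1`. -/
def τOH (n k : ℕ) : Fin (n+1) →o Fin 2 where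
  toFun i := if (i:ℕ) + k ≤ n then 0 else 1
  monotone' := by
    intro i j hij
    have h : (i:ℕ) ≤ (j:ℕ) := hij
    dsimp only
    split_ifs with h1 h2 h3
    · exact le_refl _
    · exact Fin.zero_le _
    · exact absurd h3 (by omega)
    · exact le_refl _

/-- application of `θ : [m] → [n]` to a natural number (clamped). -/
def fApp {m n : ℕ} (θ : Fin (m+1) →o Fin (n+1)) (x : ℕ) : ℕ :=
  (θ ⟨min x m, Nat.lt_succ_of_le (Nat.min_le_right _ _)⟩ : Fin (n+1))

theorem fApp_mono {m n : ℕ} (θ : Fin (m+1) →o Fin (n+1)) {x y : ℕ} (h : x ≤ y) :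
    fApp θ x ≤ fApp θ y :=
  Fin.le_def.mp (θ.monotone (Fin.mk_le_mk.mpr (by omega)))

theorem fApp_le {m n : ℕ} (θ : Fin (m+1) →o Fin (n+1)) (x : ℕ) : fApp θ x ≤ n :=
  Nat.lt_succ_iff.mp (Fin.isLt _)

theorem fApp_coe {m n : ℕ} (θ : Fin (m+1) →o Fin (n+1)) (p : Fin (m+1)) :
    fApp θ (p:ℕ) = (θ p : ℕ) := by
  have hp : (⟨min (p:ℕ) m, Nat.lt_succ_of_le (Nat.min_le_right _ _)⟩ : Fin (m+1)) = p :=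
    Fin.ext (show min (p:ℕ) m = (p:ℕ) from by have := p.isLt; omega)
  unfold fApp
  rw [hp]

/-- `Spl_{≤ p}(θ) : [p] → [pθ]`. -/
def splLe {m n : ℕ} (θ : Fin (m+1) →o Fin (n+1)) (p : Fin (m+1)) :
    Fin ((p:ℕ)+1) →o Fin ((θ p : ℕ)+1) where
  toFun i := ⟨fApp θ (i:ℕ), by
    have h1 : fApp θ (i:ℕ) ≤ fApp θ (p:ℕ) := fApp_mono θ (by have := i.isLt; omega)
    have h2 : fApp θ (p:ℕ) = (θ p : ℕ) := fApp_coe θ p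
    omega⟩
  monotone' := by
    intro a b hab
    have h : (a:ℕ) ≤ (b:ℕ) := hab
    simp only [Fin.mk_le_mk]
    exact fApp_mono θ h

/-- `Spl_{≥ p}(θ) : [m-p] → [n-pθ]`. -/
def splGe {m n : ℕ} (θ : Fin (m+1) →o Fin (n+1)) (p : Fin (m+1)) :
    Fin (m - (p:ℕ) + 1) →o Fin (n - (θ p : ℕ) + 1) where
  toFun i := ⟨fApp θ ((i:ℕ) + (p:ℕ)) - (θ p : ℕ), by
    have h1 : fApp θ ((i:ℕ) + (p:ℕ)) ≤ n := fApp_le θ _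
    omega⟩
  monotone' := by
    intro a b hab
    have h : (a:ℕ) ≤ (b:ℕ) := hab
    simp only [Fin.mk_le_mk]
    have := fApp_mono θ (show (a:ℕ) + (p:ℕ) ≤ (b:ℕ) + (p:ℕ) by omega)
    omega

/-- the restriction `θ|_[i]^[j] : [i] → [j]` of `θ` (clamped). -/
def restrictOH {m n : ℕ} (θ : Fin (m+1) →o Fin (n+1)) (i j : ℕ) : Fin (i+1) →o Fin (j+1) where
  toFun k := ⟨min (fApp θ (k:ℕ)) j, Nat.lt_succ_of_le (Nat.min_le_right _ _)⟩
  monotone' := by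
    intro a b hab
    have h : (a:ℕ) ≤ (b:ℕ) := hab
    simp only [Fin.mk_le_mk]
    have := fApp_mono θ h
    omega

/-- ascending product `f a * f (a+1) * ⋯ * f (b-1)`. -/
def aProd {γ : Type*} [Monoid γ] (f : ℕ → γ) (a : ℕ) : ℕ → γ
  | 0 => 1
  | b+1 => if a ≤ b then aProd f a b * f b else 1

/-- descending product `f (b-1) * f (b-2) * ⋯ * f a`. -/
def dProd {γ : Type*} [Monoid γ] (f : ℕ → γ) (a : ℕ) : ℕ → γ
  | 0 => 1
  | b+1 => if a ≤ b then f b * dProd f a b else 1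

end Paper
namespace Paper

/-- A simplicial group, given by levels, structure maps, functoriality,
and levelwise multiplicativity. -/
structure SGrp where
  obj : ℕ → Type
  grp : ∀ n, Group (obj n)
  map : ∀ {m n : ℕ}, (Fin (m+1) →o Fin (n+1)) → obj n → obj m
  map_id : ∀ {n : ℕ} (x : obj n), map OrderHom.id x = x
  map_comp : ∀ {l m n : ℕ} (α : Fin (l+1) →o Fin (m+1)) (β : Fin (m+1) →o Fin (n+1)) (x : obj n),
    map α (map β x) = map (β.comp α) x
  map_mul : ∀ {m n : ℕ} (θ : Fin (m+1) →o Fin (n+1)) (x y : obj n),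
    map θ (x * y) = map θ x * map θ y

attribute [instance] SGrp.grp

namespace SGrp

/-- face `d_k : G_N → G_{N-1}` -/
def face (G : SGrp) (k : ℕ) {N : ℕ} : G.obj N → G.obj (N-1) := G.map (δOH k (N-1) N)

/-- degeneracy `s_k : G_M → G_{M+1}` -/
def deg (G : SGrp) (k : ℕ) {M : ℕ} : G.obj M → G.obj (M+1) := G.map (σOH k (M+1) M)

/-- transport between levels (junk value `1` when levels differ). -/
def gcast (G : SGrp) {a : ℕ} (b : ℕ) (x : G.obj a) : G.obj b := if h : a = b then h ▸ x else 1

/-- descending composite of faces `d_{i+c} d_{i+c-1} ⋯ d_{i+1}`. -/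
def dcomp (G : SGrp) : (i c : ℕ) → {N : ℕ} → G.obj N → G.obj (N - c)
  | _, 0, _, x => x
  | i, c+1, _, x => G.face (i+1) (G.dcomp (i+1) c x)

/-- ascending composite of degeneracies `s_i s_{i+1} ⋯ s_{i+c-1}`. -/
def scomp (G : SGrp) : (i c : ℕ) → {M : ℕ} → G.obj M → G.obj (M + c)
  | _, 0, _, x => x
  | i, c+1, _, x => G.deg (i+c) (G.scomp i c x)

/-- `x ↦ x d_j ⋯ d_{i+1} s_i ⋯ s_{j-1}`, an endomap of `G_N`. -/
def ds (G : SGrp) (i j : ℕ) {N : ℕ} (x : G.obj N) : G.obj N :=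
  G.gcast N (G.scomp i (min (j - i) N) (G.dcomp i (min (j - i) N) x))

/-- `x ↦ x d_j ⋯ d_{i+1} s_i ⋯ s_{n-1} : G_j → G_n`. -/
def dsTo (G : SGrp) (i n : ℕ) {j : ℕ} (x : G.obj j) : G.obj n :=
  G.gcast n (G.scomp i (n - i) (G.gcast i (G.dcomp i (j - i) x)))

/-- the `y_i` of the section `S_G`, defined by descending recursion (with fuel). -/
def yAux (G : SGrp) (n : ℕ) (g : ∀ j : ℕ, G.obj j) : ℕ → ℕ → G.obj n
  | 0, _ => 1
  | fuel+1, i =>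
      aProd (fun j => G.ds i j (G.yAux n g fuel j)⁻¹) (i+1) n *
      dProd (fun j => G.dsTo i n (g j)) i n

/-- `W̄_n G = ∏_{j = n-1}^{0} G_j`. -/
def WbarN (G : SGrp) (n : ℕ) : Type := ∀ j : Fin n, G.obj (j:ℕ)

/-- extension of a tuple in `W̄_n G` by `1`. -/
def gE (G : SGrp) {n : ℕ} (g : G.WbarN n) : ∀ j : ℕ, G.obj j :=
  fun j => if h : j < n then g ⟨j, h⟩ else 1

/-- the coretraction `(S_G)_n : W̄_n G → Diag_n NG = (G_n)^n`. -/
def SGn (G : SGrp) (n : ℕ) (g : G.WbarN n) : Fin n → G.obj n :=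
  fun i => G.yAux n (G.gE g) n (i:ℕ)

/-- extension of a tuple in `(G_n)^n` by `1`. -/
def xE (G : SGrp) {n : ℕ} (x : Fin n → G.obj n) : ℕ → G.obj n :=
  fun j => if h : j < n then x ⟨j, h⟩ else 1

/-- the structure map `W̄_θ : W̄_n G → W̄_m G` of the Kan classifying simplicial set. -/
def wbarMap (G : SGrp) {m n : ℕ} (θ : Fin (m+1) →o Fin (n+1)) (g : G.WbarN n) : G.WbarN m :=
  fun i => dProd (fun j => G.map (restrictOH θ (i:ℕ) j) (G.gE g j))
    ((θ i.castSucc : Fin (n+1)) : ℕ) ((θ i.succ : Fin (n+1)) : ℕ)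

/-- the structure map `(Diag NG)_θ : (G_n)^n → (G_m)^m` of the diagonal of the nerve. -/
def diagMap (G : SGrp) {m n : ℕ} (θ : Fin (m+1) →o Fin (n+1)) (x : Fin n → G.obj n) :
    Fin m → G.obj m :=
  fun i => dProd (fun j => G.map θ (G.xE x j))
    ((θ i.castSucc : Fin (n+1)) : ℕ) ((θ i.succ : Fin (n+1)) : ℕ)

/-- the retraction `(D_G)_n : Diag_n NG → W̄_n G`, `(g_i)_i ↦ (g_i d_n ⋯ d_{i+1})_i`. -/
def DGn (G : SGrp) (n : ℕ) (x : Fin n → G.obj n) : G.WbarN n :=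
  fun i => G.gcast (i:ℕ) (G.dcomp (i:ℕ) (n - (i:ℕ)) (x i))

/-- the components `y_i^{(n+1-k)}` of the homotopy `H`, by descending recursion (with fuel). -/
def hAux (G : SGrp) (n k : ℕ) (g : ℕ → G.obj n) : ℕ → ℕ → G.obj n
  | 0, _ => 1
  | fuel+1, i =>
      if k ≤ i + 1 then g i
      else
        aProd (fun j => G.ds i j (G.hAux n k g fuel j)⁻¹) (i+1) (k-1) *
        dProd (fun j => G.ds i (k-1) (g j)) i (k-1)

end SGrp

/-- recover `k` from the simplex `τ^{n+1-k} ∈ Δ^1_n`: the number of vertices sent to `0`. -/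
def kOf {n : ℕ} (t : Fin (n+1) →o Fin 2) : ℕ :=
  (Finset.univ.filter (fun i => t i = 0)).card

namespace SGrp

/-- the homotopy `H_n : Diag_n NG × Δ^1_n → Diag_n NG`. -/
def Hn (G : SGrp) (n : ℕ) (x : Fin n → G.obj n) (t : Fin (n+1) →o Fin 2) : Fin n → G.obj n :=
  fun i => G.hAux n (kOf t) (G.xE x) (n+1) (i:ℕ)

end SGrp

/-- morphisms of simplicial groups. -/
structure SGrpHom (G G' : SGrp) where
  app : ∀ n, G.obj n → G'.obj n
  comm : ∀ {m n : ℕ} (θ : Fin (m+1) →o Fin (n+1)) (x : G.obj n),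
    app m (G.map θ x) = G'.map θ (app n x)
  mul : ∀ (n : ℕ) (x y : G.obj n), app n (x * y) = app n x * app n y

end Paper

/-!
Write `D_i^N : G_N → G_i` for the homomorphism `x ↦ x d_N ⋯ d_{i+1}`. By the simplicial
identities, `D_i^N = D_i^j ∘ D_j^N`, `D_i^n` is invariant under `x ↦ x d_j ⋯ d_{i+1} s_i ⋯ s_{j-1}`,
and it sends `x d_j ⋯ d_{i+1} s_i ⋯ s_{n-1}` to `D_i^j x`. Applying `D_i^n` to the recursive formula
for `y_i`, and using `D_j^n y_j = g_j` for `j > i` by descending induction, leaves the telescoping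
product `(∏_{j>i} (D_i^j g_j)⁻¹) (∏_{j≥i} D_i^j g_j) = D_i^i g_i = g_i`.
The simplicial identities are checked on vertex maps, where they become linear arithmetic.
-/

namespace Paper

def dcompOH (i c N : ℕ) : Fin (N - c + 1) →o Fin (N + 1) where
  toFun x := ⟨min (if (x:ℕ) ≤ i then (x:ℕ) else (x:ℕ) + c) N,
    Nat.lt_succ_of_le (Nat.min_le_right _ _)⟩
  monotone' := by
    intro x y hxy
    have h : (x:ℕ) ≤ (y:ℕ) := hxy
    simp only [Fin.mk_le_mk]
    split_ifs <;> omega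

def scompOH (i c M : ℕ) : Fin (M + c + 1) →o Fin (M + 1) where
  toFun x := ⟨min (if (x:ℕ) ≤ i then (x:ℕ) else max i ((x:ℕ) - c)) M,
    Nat.lt_succ_of_le (Nat.min_le_right _ _)⟩
  monotone' := by
    intro x y hxy
    have h : (x:ℕ) ≤ (y:ℕ) := hxy
    simp only [Fin.mk_le_mk]
    split_ifs <;> omega

def castOH {a b : ℕ} (h : a = b) : Fin (b + 1) →o Fin (a + 1) :=
  ⟨Fin.cast (by rw [h]), fun _ _ hxy => hxy⟩

lemma fApp_dcompOH (i c N x : ℕ) :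
    fApp (dcompOH i c N) x =
      min (if min x (N - c) ≤ i then min x (N - c) else min x (N - c) + c) N := rfl

lemma fApp_scompOH (i c M x : ℕ) :
    fApp (scompOH i c M) x =
      min (if min x (M + c) ≤ i then min x (M + c) else max i (min x (M + c) - c)) M := rfl

lemma fApp_δOH (k a b x : ℕ) :
    fApp (δOH k a b) x = min (if min x a < k then min x a else min x a + 1) b := rfl

lemma fApp_σOH (k a b x : ℕ) :
    fApp (σOH k a b) x = min (if min x a ≤ k then min x a else min x a - 1) b := rfl

lemma fApp_castOH {a b : ℕ} (h : a = b) (x : ℕ) : fApp (castOH h) x = min x b := rfl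

lemma fApp_id {n : ℕ} (x : ℕ) : fApp (OrderHom.id : Fin (n+1) →o Fin (n+1)) x = min x n := rfl

lemma fApp_comp {l m n : ℕ} (α : Fin (l+1) →o Fin (m+1)) (β : Fin (m+1) →o Fin (n+1))
    (x : ℕ) : fApp (β.comp α) x = fApp β (fApp α x) := by
  unfold fApp
  have h : (⟨min ((α ⟨min x l, Nat.lt_succ_of_le (Nat.min_le_right _ _)⟩ : Fin (m+1)) : ℕ) m,
      Nat.lt_succ_of_le (Nat.min_le_right _ _)⟩ : Fin (m+1)) =
      α ⟨min x l, Nat.lt_succ_of_le (Nat.min_le_right _ _)⟩ :=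
    Fin.ext (Nat.min_eq_left (Nat.lt_succ_iff.mp (Fin.isLt _)))
  rw [h]
  rfl

lemma orderHom_ext_of_fApp {m n : ℕ} {φ ψ : Fin (m+1) →o Fin (n+1)}
    (h : ∀ t, t ≤ m → fApp φ t = fApp ψ t) : φ = ψ := by
  ext p
  rw [← fApp_coe φ p, ← fApp_coe ψ p]
  exact h p (Nat.lt_succ_iff.mp p.isLt)

namespace SGrp

variable (G : SGrp)

lemma gcast_self {a : ℕ} (x : G.obj a) : G.gcast a x = x := by
  simp [gcast]

lemma gcast_mul {a b : ℕ} (x y : G.obj a) :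
    G.gcast b (x * y) = G.gcast b x * G.gcast b y := by
  by_cases h : a = b
  · subst h
    simp only [gcast_self]
  · simp [gcast, h]

lemma dcomp_eq_map (c i N : ℕ) (x : G.obj N) : G.dcomp i c x = G.map (dcompOH i c N) x := by
  induction c generalizing i with
  | zero =>
    rw [show dcompOH i 0 N = OrderHom.id from orderHom_ext_of_fApp fun t _ => by
      simp only [fApp_dcompOH, fApp_id]; split_ifs <;> omega, G.map_id]
    rfl
  | succ c ih =>
    show G.face (i+1) (G.dcomp (i+1) c x) = _
    rw [ih, face, G.map_comp]
    congr 1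
    refine orderHom_ext_of_fApp fun t _ => ?_
    simp only [fApp_comp, fApp_dcompOH, fApp_δOH]
    split_ifs <;> omega

lemma scomp_eq_map (c i M : ℕ) (x : G.obj M) : G.scomp i c x = G.map (scompOH i c M) x := by
  induction c with
  | zero =>
    rw [show scompOH i 0 M = OrderHom.id from orderHom_ext_of_fApp fun t _ => by
      simp only [fApp_scompOH, fApp_id]; split_ifs <;> omega, G.map_id]
    rfl
  | succ c ih =>
    show G.deg (i+c) (G.scomp i c x) = _
    rw [ih, deg, G.map_comp]
    congr 1
    refine orderHom_ext_of_fApp fun t _ => ?_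
    simp only [fApp_comp, fApp_scompOH, fApp_σOH]
    split_ifs <;> omega

lemma map_gcast {a b p : ℕ} (θ : Fin (p+1) →o Fin (b+1)) (y : G.obj a) (h : a = b) :
    G.map θ (G.gcast b y) = G.map ((castOH h).comp θ) y := by
  subst h
  rw [gcast_self]
  rfl

lemma gcast_map_congr {p q n c : ℕ} (ψ : Fin (p+1) →o Fin (n+1)) (ψ' : Fin (q+1) →o Fin (n+1))
    (x : G.obj n) (h : p = q) (hψ : ∀ t, t ≤ p → fApp ψ t = fApp ψ' t) :
    G.gcast c (G.map ψ x) = G.gcast c (G.map ψ' x) := by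
  subst h
  rw [orderHom_ext_of_fApp hψ]

def faces (i N : ℕ) : G.obj N →* G.obj i :=
  MonoidHom.mk' (fun x => G.gcast i (G.dcomp i (N - i) x)) fun x y => by
    simp only [dcomp_eq_map, G.map_mul, gcast_mul]

lemma faces_eq_map (i N : ℕ) (x : G.obj N) :
    G.faces i N x = G.gcast i (G.map (dcompOH i (N - i) N) x) :=
  congrArg (G.gcast i) (G.dcomp_eq_map _ _ _ x)

lemma faces_self (i : ℕ) (x : G.obj i) : G.faces i i x = x := by
  rw [faces_eq_map, G.gcast_map_congr _ OrderHom.id x (by omega), G.map_id, gcast_self]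
  intro t _
  simp only [fApp_dcompOH, fApp_id]
  split_ifs <;> omega

lemma faces_faces {i j n : ℕ} (hij : i ≤ j) (hjn : j ≤ n) (x : G.obj n) :
    G.faces i j (G.faces j n x) = G.faces i n x := by
  simp (disch := omega) only [faces_eq_map, map_gcast, map_comp]
  apply gcast_map_congr _ _ _ _ (by omega)
  intro t _
  simp only [fApp_comp, fApp_dcompOH, fApp_castOH]
  split_ifs <;> omega

lemma faces_ds {i j n : ℕ} (hjn : j ≤ n) (x : G.obj n) :
    G.faces i n (G.ds i j x) = G.faces i n x := by
  simp (disch := omega) only [faces_eq_map, ds, dcomp_eq_map, scomp_eq_map, map_gcast, map_comp]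
  apply gcast_map_congr _ _ _ _ (by omega)
  intro t _
  simp only [fApp_comp, fApp_dcompOH, fApp_scompOH, fApp_castOH]
  split_ifs <;> omega

lemma faces_dsTo {i j n : ℕ} (hij : i ≤ j) (hjn : j ≤ n) (x : G.obj j) :
    G.faces i n (G.dsTo i n x) = G.faces i j x := by
  simp (disch := omega) only [faces_eq_map, dsTo, dcomp_eq_map, scomp_eq_map, map_gcast, map_comp]
  apply gcast_map_congr _ _ _ _ (by omega)
  intro t _
  simp only [fApp_comp, fApp_dcompOH, fApp_scompOH, fApp_castOH]
  split_ifs <;> omega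

end SGrp

section Products

variable {γ γ' : Type*} [Monoid γ] [Monoid γ']

lemma map_aProd (F : γ →* γ') (f : ℕ → γ) (a b : ℕ) :
    F (aProd f a b) = aProd (fun j => F (f j)) a b := by
  induction b with
  | zero => exact map_one F
  | succ b ih =>
    simp only [aProd]
    split_ifs
    · rw [map_mul, ih]
    · exact map_one F

lemma map_dProd (F : γ →* γ') (f : ℕ → γ) (a b : ℕ) :
    F (dProd f a b) = dProd (fun j => F (f j)) a b := by
  induction b with
  | zero => exact map_one F
  | succ b ih =>
    simp only [dProd]
    split_ifs
    · rw [map_mul, ih]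
    · exact map_one F

lemma aProd_congr {f f' : ℕ → γ} {a b : ℕ} (h : ∀ j, a ≤ j → j < b → f j = f' j) :
    aProd f a b = aProd f' a b := by
  induction b with
  | zero => rfl
  | succ b ih =>
    simp only [aProd]
    split_ifs with hab
    · rw [ih fun j h1 h2 => h j h1 (by omega), h b hab (by omega)]
    · rfl

lemma dProd_congr {f f' : ℕ → γ} {a b : ℕ} (h : ∀ j, a ≤ j → j < b → f j = f' j) :
    dProd f a b = dProd f' a b := by
  induction b with
  | zero => rfl
  | succ b ih =>
    simp only [dProd]
    split_ifs with hab
    · rw [ih fun j h1 h2 => h j h1 (by omega), h b hab (by omega)]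
    · rfl

lemma dProd_self (f : ℕ → γ) (a : ℕ) : dProd f a a = 1 := by
  cases a with
  | zero => rfl
  | succ a => simp [dProd]

end Products

lemma aProd_inv_mul_dProd {γ : Type*} [Group γ] (c : ℕ → γ) {i n : ℕ} (hin : i < n) :
    aProd (fun j => (c j)⁻¹) (i+1) n * dProd c i n = c i := by
  induction n with
  | zero => omega
  | succ n ih =>
    rcases Nat.lt_succ_iff_lt_or_eq.mp hin with hlt | rfl
    · simp only [aProd, dProd, if_pos (Nat.succ_le_of_lt hlt), if_pos hlt.le]
      rw [mul_assoc, inv_mul_cancel_left, ih hlt]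
    · simp only [aProd, dProd, if_neg (Nat.not_succ_le_self i), le_refl, if_true, dProd_self,
        one_mul, mul_one]

namespace SGrp

variable (G : SGrp)

lemma faces_yAux (n : ℕ) (g : ∀ j : ℕ, G.obj j) (fuel i : ℕ) (hin : i < n)
    (hfuel : n - i ≤ fuel) : G.faces i n (G.yAux n g fuel i) = g i := by
  induction fuel generalizing i with
  | zero => omega
  | succ fuel ih =>
    have faces_y : ∀ j, i < j → j < n → G.faces i n (G.yAux n g fuel j) = G.faces i j (g j) :=
      fun j hij hjn => by rw [← G.faces_faces hij.le hjn.le, ih j hjn (by omega)]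
    calc G.faces i n (G.yAux n g (fuel+1) i)
        = aProd (fun j => (G.faces i j (g j))⁻¹) (i+1) n *
            dProd (fun j => G.faces i j (g j)) i n := by
          rw [yAux, _root_.map_mul, map_aProd, map_dProd]
          congr 1
          · refine aProd_congr fun j hij hjn => ?_
            rw [G.faces_ds hjn.le, map_inv, faces_y j hij hjn]
          · exact dProd_congr fun j hij hjn => G.faces_dsTo hij hjn.le (g j)
      _ = G.faces i i (g i) := aProd_inv_mul_dProd _ hin
      _ = g i := G.faces_self i (g i)

end SGrp

end Paper

open Paper Paper.SGrp in
/-- the key inductive computation `y_i d_n d_{n-1} ⋯ d_{i+1} = g_i`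
for `(y_j)_j = (g_j)_j (S_G)_n`. -/
theorem stmt_11 (G : SGrp) (n : ℕ) (g : G.WbarN n) (i : Fin n) :
    G.gcast (i:ℕ) (G.dcomp (i:ℕ) (n - (i:ℕ)) (G.SGn n g i)) = g i := by
  have h := G.faces_yAux n (G.gE g) n i i.isLt (Nat.sub_le n i)
  rwa [gE, dif_pos i.isLt] at h
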